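/- arXiv:math/9810003 — 4 statements merged into one kernel-verified Lean document; each statement's English description precedes it below -/
import Mathlib

section
/- Let ι be a countable type and a : ι → ℝ a nonnegative summable family with sum s = ∑'_j a j. Then the family indexed by the sigma type Σ (k : ℕ), (Fin k → ι) with terms ∏_{i ∈ Fin k} a (f i) is summable if and only if s < 1, and in that case its total sum equals 1/(1 − s). -/
open scoped ENNReal NNReal

lemma tsum_pi_fin_prod_ennreal {ι : Type*} (b : ι → ℝ≥0∞) :
    ∀ k : ℕ, (∑' f : Fin k → ι, ∏ i, b (f i)) = (∑' j, b j) ^ k := by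
  intro k
  induction k with
  | zero =>
      simp [tsum_eq_single (default : Fin 0 → ι) (fun f hf => absurd (Subsingleton.elim f default) hf)]
  | succ n ih =>
      rw [← (Fin.consEquiv (fun _ : Fin (n + 1) => ι)).tsum_eq, ENNReal.tsum_prod']
      simp only [Fin.consEquiv, Equiv.coe_fn_mk]
      have hp : ∀ (x : ι) (f : Fin n → ι),
          (∏ i : Fin (n + 1), b ((Fin.cons x f : Fin (n + 1) → ι) i)) = b x * ∏ i, b (f i) := by
        intro x f; simp [Fin.prod_univ_succ]
      simp_rw [hp, ENNReal.tsum_mul_left, ENNReal.tsum_mul_right, ih]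
      rw [pow_succ, mul_comm]

/-- For a nonnegative summable family `a : ι → ℝ` with sum `s`, the family of
products over all tuples (indexed by `Σ k, Fin k → ι`) is summable iff `s < 1`,
and in that case the total sum is `1 / (1 - s)`. -/
theorem summable_sigma_prod_tuples_iff {ι : Type*} [Countable ι] (a : ι → ℝ)
    (ha : ∀ j, 0 ≤ a j) (hsum : Summable a) (s : ℝ) (hs : s = ∑' j : ι, a j) :
    (Summable (fun p : Σ k : ℕ, Fin k → ι => ∏ i : Fin p.1, a (p.2 i)) ↔ s < 1) ∧
      (s < 1 →
        (∑' p : Σ k : ℕ, Fin k → ι, ∏ i : Fin p.1, a (p.2 i)) = 1 / (1 - s)) := by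
  set b : ι → ℝ≥0 := fun j => ⟨a j, ha j⟩ with hb
  have hba : ∀ j, (b j : ℝ) = a j := fun j => rfl
  have hbs : Summable b := by
    rw [← NNReal.summable_coe]; simpa [hba] using hsum
  set T : ℝ≥0∞ := ∑' j, (b j : ℝ≥0∞) with hT
  have hTs : T = ENNReal.ofReal s := by
    rw [hT, hs, ENNReal.ofReal_tsum_of_nonneg ha hsum]
    congr 1; funext j
    rw [ENNReal.ofReal]; congr 1
    exact (Real.toNNReal_of_nonneg (ha j)).symm
  set g : (Σ k : ℕ, Fin k → ι) → ℝ≥0 := fun p => ∏ i, b (p.2 i) with hg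
  have hga : ∀ p, ((g p : ℝ≥0) : ℝ) = ∏ i : Fin p.1, a (p.2 i) := by
    intro p; push_cast [hg]; rfl
  have hE : (∑' p : Σ k : ℕ, Fin k → ι, (g p : ℝ≥0∞)) = (1 - T)⁻¹ := by
    rw [ENNReal.tsum_sigma']
    have : ∀ k : ℕ, (∑' f : Fin k → ι, ((g ⟨k, f⟩ : ℝ≥0) : ℝ≥0∞)) = T ^ k := by
      intro k
      rw [← tsum_pi_fin_prod_ennreal (fun j => (b j : ℝ≥0∞)) k]
      congr 1; funext f; simp [hg]
    simp_rw [this]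
    exact ENNReal.tsum_geometric T
  have hT_top : T ≠ ⊤ := by rw [hTs]; exact ENNReal.ofReal_ne_top
  have hsummable : Summable (fun p : Σ k : ℕ, Fin k → ι => ∏ i : Fin p.1, a (p.2 i)) ↔ s < 1 := by
    have h1 : Summable (fun p : Σ k : ℕ, Fin k → ι => ∏ i : Fin p.1, a (p.2 i)) ↔ Summable g := by
      rw [← NNReal.summable_coe]
      constructor <;> intro h <;> [skip; skip] <;>
        · convert h using 1; funext p; rw [hga]
    rw [h1, ← ENNReal.tsum_coe_ne_top_iff_summable, hE]
    rw [Ne, ENNReal.inv_eq_top, tsub_eq_zero_iff_le]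
    rw [not_le, hTs, ← ENNReal.ofReal_one, ENNReal.ofReal_lt_ofReal_iff one_pos]
  refine ⟨hsummable, fun hs1 => ?_⟩
  have hgsum : Summable g := by
    rw [← NNReal.summable_coe]
    convert hsummable.2 hs1 using 1; funext p; rw [hga]
  have h2 : (∑' p : Σ k : ℕ, Fin k → ι, ∏ i : Fin p.1, a (p.2 i)) = ((∑' p, (g p : ℝ≥0∞))).toReal := by
    rw [← ENNReal.coe_tsum hgsum, ENNReal.coe_toReal]
    have he : (fun p : Σ k : ℕ, Fin k → ι => ∏ i : Fin p.1, a (p.2 i))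
        = fun p => ((g p : ℝ≥0) : ℝ) := funext fun p => (hga p).symm
    rw [he, ← NNReal.coe_tsum]
  rw [h2, hE, hTs, ← ENNReal.ofReal_one, ← ENNReal.ofReal_sub _ (hs ▸ tsum_nonneg ha),
    ENNReal.toReal_inv, ENNReal.toReal_ofReal (by linarith), one_div]
end

section
/- Let n ≥ 1 be a natural number and β₀ > 0 satisfy e^{-2πβ₀n} + e^{-2πβ₀} = 1. Then for every real β > 0: e^{-2πβn}/(1 − e^{-2πβ}) < 1 if and only if β > β₀; consequently the function k ↦ (e^{-2πβn}/(1 − e^{-2πβ}))^k on ℕ is summable if and only if β > β₀. -/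
open Real

private lemma g_strictAnti (n : ℕ) (hn : 1 ≤ n) :
    StrictAnti (fun β : ℝ => Real.exp (-(2 * π * β) * (n : ℝ)) + Real.exp (-(2 * π * β))) := by
  intro x y hxy
  have hπ : (0:ℝ) < 2 * π := by positivity
  have hn' : (0:ℝ) < (n : ℝ) := by exact_mod_cast hn
  apply add_lt_add
  · apply Real.exp_lt_exp.2
    have : 2 * π * x < 2 * π * y := by nlinarith
    nlinarith
  · apply Real.exp_lt_exp.2
    nlinarith

/-- If `β₀ > 0` solves `e^{-2πβ₀n} + e^{-2πβ₀} = 1` (with `n ≥ 1`), then for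
every `β > 0` one has `e^{-2πβn}/(1-e^{-2πβ}) < 1` iff `β > β₀`, and the
geometric series with this ratio is summable iff `β > β₀`. -/
theorem ratio_lt_one_and_summable_iff (n : ℕ) (hn : 1 ≤ n) (β₀ : ℝ) (hβ₀ : 0 < β₀)
    (h : Real.exp (-(2 * π * β₀) * (n : ℝ)) + Real.exp (-(2 * π * β₀)) = 1) :
    ∀ β : ℝ, 0 < β →
      ((Real.exp (-(2 * π * β) * (n : ℝ)) / (1 - Real.exp (-(2 * π * β))) < 1
          ↔ β₀ < β) ∧
        (Summable (fun k : ℕ =>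
            (Real.exp (-(2 * π * β) * (n : ℝ)) / (1 - Real.exp (-(2 * π * β)))) ^ k)
          ↔ β₀ < β)) := by
  intro β hβ
  have hπ : (0:ℝ) < 2 * π := by positivity
  have hden : 0 < 1 - Real.exp (-(2 * π * β)) := by
    have : Real.exp (-(2 * π * β)) < 1 := by
      rw [Real.exp_lt_one_iff]; nlinarith
    linarith
  have hratio : Real.exp (-(2 * π * β) * (n : ℝ)) / (1 - Real.exp (-(2 * π * β))) < 1
      ↔ β₀ < β := by
    rw [div_lt_one hden]
    constructor
    · intro hlt
      by_contra hle
      push_neg at hle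
      have := (g_strictAnti n hn).antitone hle
      rw [h] at this
      linarith
    · intro hlt
      have := g_strictAnti n hn hlt
      simp only at this
      rw [h] at this
      linarith
  refine ⟨hratio, ?_⟩
  rw [summable_geometric_iff_norm_lt_one]
  have hnn : 0 ≤ Real.exp (-(2 * π * β) * (n : ℝ)) / (1 - Real.exp (-(2 * π * β))) := by
    positivity
  rw [Real.norm_eq_abs, abs_of_nonneg hnn]
  exact hratio
end

section
/- Let n ≥ 1 be a natural number and β₀ > 0 satisfy e^{-2πβ₀n} + e^{-2πβ₀} = 1. Then for every real β > 0, the family indexed by the sigma type Σ (k : ℕ), (Fin k → ℕ) with terms ∏_{i ∈ Fin k} e^{-2πβ(n + f i)} is summable if and only if β > β₀. -/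
open Real

private lemma aux_summable_prod (g : ℕ → ℝ) (hg : Summable g) (hg0 : ∀ j, 0 ≤ g j) (k : ℕ) :
    Summable (fun f : Fin k → ℕ => ∏ i, g (f i)) ∧
      (∑' f : Fin k → ℕ, ∏ i, g (f i)) = (∑' j, g j) ^ k := by
  induction k with
  | zero =>
    simp only [Finset.univ_eq_empty, Finset.prod_empty, pow_zero]
    exact ⟨Summable.of_finite, by simp [tsum_const]⟩
  | succ k ih =>
    have hsum : Summable (fun p : ℕ × (Fin k → ℕ) => g p.1 * ∏ i, g (p.2 i)) :=
      Summable.mul_of_nonneg (f := g) (g := fun f : Fin k → ℕ => ∏ i, g (f i))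
        hg ih.1 hg0 (fun f => Finset.prod_nonneg fun i _ => hg0 _)
    have hterm : ∀ p : ℕ × (Fin k → ℕ),
        (∏ i, g ((Fin.consEquiv (fun _ => ℕ)) p i)) = g p.1 * ∏ i, g (p.2 i) := by
      intro p
      rw [Fin.prod_univ_succ]
      simp [Fin.consEquiv]
    constructor
    · rw [← (Fin.consEquiv (fun _ => ℕ)).summable_iff]
      exact hsum.congr fun p => (hterm p).symm
    · rw [← (Fin.consEquiv (fun _ => ℕ)).tsum_eq]
      have hmul := tsum_mul_tsum_of_summable_norm (f := g) (g := fun f : Fin k → ℕ => ∏ i, g (f i))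
        (by simpa [Real.norm_eq_abs, abs_of_nonneg (hg0 _)] using hg)
        (by
          have : (fun f : Fin k → ℕ => ‖∏ i, g (f i)‖) = fun f : Fin k → ℕ => ∏ i, g (f i) :=
            funext fun f => norm_of_nonneg (Finset.prod_nonneg fun i _ => hg0 _)
          rw [this]; exact ih.1)
      calc (∑' p : ℕ × (Fin k → ℕ), ∏ i, g ((Fin.consEquiv (fun _ => ℕ)) p i))
          = ∑' p : ℕ × (Fin k → ℕ), g p.1 * ∏ i, g (p.2 i) := tsum_congr hterm
        _ = (∑' j, g j) * (∑' f : Fin k → ℕ, ∏ i, g (f i)) := hmul.symm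
        _ = (∑' j, g j) ^ (k + 1) := by rw [ih.2, pow_succ, mul_comm]

/-- If `β₀ > 0` solves `e^{-2πβ₀n} + e^{-2πβ₀} = 1` (with `n ≥ 1`), then for
every `β > 0` the Fock-space trace family over `Σ k, (Fin k → ℕ)` with terms
`∏_i e^{-2πβ(n + f i)}` is summable iff `β > β₀`. -/
theorem summable_fock_trace_An_iff (n : ℕ) (hn : 1 ≤ n) (β₀ : ℝ) (hβ₀ : 0 < β₀)
    (h : Real.exp (-(2 * π * β₀) * (n : ℝ)) + Real.exp (-(2 * π * β₀)) = 1) :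
    ∀ β : ℝ, 0 < β →
      (Summable (fun p : Σ k : ℕ, Fin k → ℕ =>
          ∏ i : Fin p.1, Real.exp (-(2 * π * β) * ((n : ℝ) + (p.2 i : ℝ))))
        ↔ β₀ < β) := by
  intro β hβ
  have hπ : (0 : ℝ) < π := Real.pi_pos
  have hβneg : -(2 * π * β) < 0 := by nlinarith
  set c : ℝ := Real.exp (-(2 * π * β) * (n : ℝ)) with hc
  set r : ℝ := Real.exp (-(2 * π * β)) with hr
  have hr1 : r < 1 := Real.exp_lt_one_iff.mpr hβneg
  have hr0 : 0 < r := Real.exp_pos _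
  have hc0 : 0 < c := Real.exp_pos _
  set g : ℕ → ℝ := fun j => c * r ^ j with hgdef
  have hterm : ∀ j : ℕ, Real.exp (-(2 * π * β) * ((n : ℝ) + (j : ℝ))) = g j := by
    intro j
    rw [hgdef]
    simp only [mul_add, Real.exp_add, hc, hr]
    rw [mul_comm (-(2 * π * β)) (j : ℝ), Real.exp_nat_mul]
  have hg0 : ∀ j, 0 ≤ g j := fun j => le_of_lt (mul_pos hc0 (pow_pos hr0 j))
  have hgsum : Summable g := (summable_geometric_of_lt_one hr0.le hr1).mul_left c
  have h1r : 0 < 1 - r := by linarith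
  have hgt : (∑' j, g j) = c * (1 - r)⁻¹ := by
    rw [hgdef, tsum_mul_left, tsum_geometric_of_lt_one hr0.le hr1]
  have hfam : (fun p : Σ k : ℕ, Fin k → ℕ =>
      ∏ i : Fin p.1, Real.exp (-(2 * π * β) * ((n : ℝ) + (p.2 i : ℝ))))
      = fun p : Σ k : ℕ, Fin k → ℕ => ∏ i, g (p.2 i) := by
    funext p; exact Finset.prod_congr rfl fun i _ => hterm _
  rw [hfam]
  have hS0 : (0 : ℝ) ≤ c * (1 - r)⁻¹ := by positivity
  have key : (Summable fun p : Σ k : ℕ, Fin k → ℕ => ∏ i, g (p.2 i)) ↔ c * (1 - r)⁻¹ < 1 := by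
    rw [summable_sigma_of_nonneg (fun p => Finset.prod_nonneg fun i _ => hg0 _)]
    constructor
    · rintro ⟨-, hsum⟩
      have hgeo : Summable (fun k : ℕ => (c * (1 - r)⁻¹) ^ k) := by
        refine hsum.congr fun k => ?_
        rw [(aux_summable_prod g hgsum hg0 k).2, hgt]
      have := summable_geometric_iff_norm_lt_one.mp hgeo
      rwa [Real.norm_eq_abs, abs_of_nonneg hS0] at this
    · intro hS1
      refine ⟨fun k => (aux_summable_prod g hgsum hg0 k).1, ?_⟩
      refine (summable_geometric_of_lt_one hS0 hS1).congr fun k => ?_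
      rw [(aux_summable_prod g hgsum hg0 k).2, hgt]
  rw [key]
  have hchar : c * (1 - r)⁻¹ < 1 ↔ c + r < 1 := by
    rw [← div_eq_mul_inv, div_lt_one h1r]
    constructor <;> intro <;> linarith
  rw [hchar]
  have hn1 : (1 : ℝ) ≤ (n : ℝ) := by exact_mod_cast hn
  have hn0 : (0 : ℝ) < (n : ℝ) := by linarith
  constructor
  · intro hlt
    by_contra hle
    push_neg at hle
    have h1 : Real.exp (-(2 * π * β₀) * (n : ℝ)) ≤ c := by
      rw [hc]
      refine Real.exp_le_exp.mpr ?_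
      nlinarith [mul_nonneg (mul_nonneg hπ.le (sub_nonneg.mpr hle)) hn0.le]
    have h2 : Real.exp (-(2 * π * β₀)) ≤ r := by
      rw [hr]
      refine Real.exp_le_exp.mpr ?_
      nlinarith
    linarith
  · intro hlt
    have h1 : c < Real.exp (-(2 * π * β₀) * (n : ℝ)) := by
      rw [hc]
      refine Real.exp_lt_exp.mpr ?_
      nlinarith [mul_pos (mul_pos hπ (sub_pos.mpr hlt)) hn0]
    have h2 : r < Real.exp (-(2 * π * β₀)) := by
      rw [hr]
      refine Real.exp_lt_exp.mpr ?_
      nlinarith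
    linarith
end

section
/- For every real T > 0 there exist a natural number n ≥ 1 and a real β₀ with 0 < β₀ < T such that for every real β > 0 the family indexed by Σ (k : ℕ), (Fin k → ℕ) with terms ∏_{i ∈ Fin k} e^{-2πβ(n + f i)} is summable if and only if β > β₀. -/
open Real Filter

/-!
The `k`-particle part of the trace is the `k`-th power of the one-particle trace
`∑ⱼ e^{-2πβ(n+j)} = qⁿ / (1 - q)` with `q = e^{-2πβ}`, so the full trace is a geometric series
and converges exactly when `qⁿ + q < 1`. As `β` increases, `qⁿ + q` decreases strictly from `2`
at `β = 0`, so this happens exactly beyond the unique `β₀` with `qⁿ + q = 1`; taking `n` large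
makes `qⁿ + q < 1` already at `β = T`, which forces `β₀ < T`.
-/

theorem hasSum_fin_prod_of_nonneg {ι : Type*} {a : ι → ℝ} {s : ℝ} (ha : HasSum a s)
    (ha0 : ∀ i, 0 ≤ a i) (k : ℕ) :
    HasSum (fun f : Fin k → ι => ∏ i, a (f i)) (s ^ k) := by
  induction k with
  | zero => simp
  | succ k ih =>
    set g : (Fin k → ι) → ℝ := fun f => ∏ i, a (f i)
    have hg0 : ∀ f, 0 ≤ g f := fun f => Finset.prod_nonneg fun i _ => ha0 _
    have hmul := ha.mul ih (ha.summable.mul_of_nonneg ih.summable ha0 hg0)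
    rw [← (Fin.consEquiv fun _ => ι).hasSum_iff, pow_succ']
    simpa [g, Function.comp_def, Fin.prod_univ_succ] using hmul

theorem summable_sigma_fin_prod_iff {ι : Type*} {a : ι → ℝ} {s : ℝ} (ha : HasSum a s)
    (ha0 : ∀ i, 0 ≤ a i) :
    Summable (fun p : Σ k : ℕ, Fin k → ι => ∏ i, a (p.2 i)) ↔ s < 1 := by
  have hfiber := hasSum_fin_prod_of_nonneg ha ha0
  rw [summable_sigma_of_nonneg fun p => Finset.prod_nonneg fun i _ => ha0 _]
  simp only [fun k => (hfiber k).tsum_eq, fun k => (hfiber k).summable, forall_const,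
    true_and, summable_geometric_iff_norm_lt_one, norm_of_nonneg (ha.nonneg ha0)]

theorem summable_fock_trace_iff (n : ℕ) {c : ℝ} (hc : 0 < c) :
    Summable (fun p : Σ k : ℕ, Fin k → ℕ =>
        ∏ i : Fin p.1, exp (-c * ((n : ℝ) + (p.2 i : ℝ))))
      ↔ exp (-c) ^ n + exp (-c) < 1 := by
  set q := exp (-c)
  have hq1 : q < 1 := exp_lt_one_iff.2 (neg_neg_of_pos hc)
  have hterm : ∀ j : ℕ, exp (-c * ((n : ℝ) + j)) = q ^ (n + j) := by
    intro j
    rw [← exp_nat_mul]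
    push_cast
    ring_nf
  have hone : HasSum (fun j : ℕ => q ^ (n + j)) (q ^ n / (1 - q)) := by
    simpa only [pow_add, div_eq_mul_inv] using
      (hasSum_geometric_of_lt_one (exp_pos _).le hq1).mul_left (q ^ n)
  simp only [hterm]
  rw [summable_sigma_fin_prod_iff hone fun j => by positivity, div_lt_one (sub_pos.2 hq1),
    lt_sub_iff_add_lt]

theorem StrictAnti.exists_lt_iff_lt {f : ℝ → ℝ} (hf : StrictAnti f) {a b y : ℝ}
    (hcont : ContinuousOn f (Set.Icc a b)) (hya : y < f a) (hyb : f b < y) :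
    ∃ x₀, a < x₀ ∧ x₀ < b ∧ ∀ x, f x < y ↔ x₀ < x := by
  have hab : a ≤ b := (hf.lt_iff_gt.1 (hyb.trans hya)).le
  obtain ⟨x₀, ⟨hax₀, hx₀b⟩, hfx₀⟩ := intermediate_value_Icc' hab hcont ⟨hyb.le, hya.le⟩
  subst hfx₀
  exact ⟨x₀, hax₀.lt_of_ne (by rintro rfl; exact hya.false),
    hx₀b.lt_of_ne (by rintro rfl; exact hyb.false), fun x => hf.lt_iff_gt⟩

theorem strictAnti_exp_pow_add_exp (n : ℕ) {c : ℝ} (hc : 0 < c) :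
    StrictAnti fun β : ℝ => exp (-(c * β)) ^ n + exp (-(c * β)) := by
  have hexp : StrictAnti fun β : ℝ => exp (-(c * β)) :=
    exp_strictMono.comp_strictAnti fun x y hxy => neg_lt_neg (mul_lt_mul_of_pos_left hxy hc)
  exact Antitone.add_strictAnti
    (fun x y hxy => pow_le_pow_left₀ (exp_pos _).le (hexp.antitone hxy) n) hexp

/-- For every `T > 0` there are `n ≥ 1` and `0 < β₀ < T` such that for every
`β > 0` the Fock-space trace family over `Σ k, (Fin k → ℕ)` with terms
`∏_i e^{-2πβ(n + f i)}` is summable iff `β > β₀`. -/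
theorem exists_net_with_large_maximal_temperature (T : ℝ) (hT : 0 < T) :
    ∃ (n : ℕ), 1 ≤ n ∧ ∃ β₀ : ℝ, 0 < β₀ ∧ β₀ < T ∧
      ∀ β : ℝ, 0 < β →
        (Summable (fun p : Σ k : ℕ, Fin k → ℕ =>
            ∏ i : Fin p.1, Real.exp (-(2 * π * β) * ((n : ℝ) + (p.2 i : ℝ))))
          ↔ β₀ < β) := by
  set q := exp (-(2 * π * T))
  have hq1 : q < 1 := exp_lt_one_iff.2 (by nlinarith [pi_pos])
  obtain ⟨n, hn, hqn⟩ : ∃ n : ℕ, 1 ≤ n ∧ q ^ n < 1 - q :=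
    ((eventually_ge_atTop 1).and ((tendsto_pow_atTop_nhds_zero_of_lt_one (exp_pos _).le hq1).eventually
      (gt_mem_nhds (sub_pos.2 hq1)))).exists
  obtain ⟨β₀, hβ₀, hβ₀T, hthreshold⟩ :=
    (strictAnti_exp_pow_add_exp n (by positivity : 0 < 2 * π)).exists_lt_iff_lt
      (a := 0) (b := T) (y := 1) (by fun_prop) (by norm_num) (by linarith)
  exact ⟨n, hn, β₀, hβ₀, hβ₀T, fun β hβ =>
    (summable_fock_trace_iff n (by positivity)).trans (hthreshold β)⟩
end
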